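/- arXiv:2201.04753 — 3 statements merged into one kernel-verified Lean document; each statement's English description precedes it below -/
import Mathlib

section
/- For a standard Gaussian random variable N and a differentiable function f with E[f(N)] = 0, equality E[f'(N)]² = E[f(N)²] holds if and only if f(x) = αx for some real α (almost everywhere with respect to the Gaussian measure). -/
/-!
Gaussian integration by parts (Stein's lemma) turns `E[f'(N)]` into `E[N f(N)]`, and `E[N²] = 1`.
So the claim is the equality case of Cauchy–Schwarz for `f(N)` and `N`:
with `α = E[N f(N)]`, `E[(f(N) - αN)²] = E[f(N)²] - α²`.
-/

open MeasureTheory ProbabilityTheory Real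
open scoped NNReal

namespace ProbabilityTheory

lemma hasDerivAt_gaussianPDFReal (μ : ℝ) (v : ℝ≥0) (x : ℝ) :
    HasDerivAt (gaussianPDFReal μ v) (-((x - μ) / v) * gaussianPDFReal μ v x) x := by
  have h := ((((hasDerivAt_id' x).sub_const μ).pow 2).neg.div_const (2 * (v : ℝ))).exp.const_mul
    (√(2 * π * v))⁻¹
  refine h.congr_deriv ?_
  simp only [gaussianPDFReal, Pi.neg_apply, Pi.pow_apply]
  ring

lemma integrable_gaussianReal_iff {μ : ℝ} {v : ℝ≥0} (hv : v ≠ 0) {f : ℝ → ℝ} :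
    Integrable f (gaussianReal μ v) ↔ Integrable (fun x => gaussianPDFReal μ v x * f x) := by
  rw [gaussianReal_of_var_ne_zero _ hv, gaussianPDF_def,
    integrable_withDensity_iff_integrable_smul' (measurable_gaussianPDFReal μ v).ennreal_ofReal
      (ae_of_all _ fun _ => ENNReal.ofReal_lt_top)]
  simp_rw [ENNReal.toReal_ofReal (gaussianPDFReal_nonneg μ v _), smul_eq_mul]

theorem integral_sub_mul_gaussianReal_eq_mul_integral_deriv {μ : ℝ} {v : ℝ≥0} (hv : v ≠ 0)
    {f f' : ℝ → ℝ}
    (hf : ∀ x, HasDerivAt f (f' x) x) (hfi : Integrable f (gaussianReal μ v))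
    (hf'i : Integrable f' (gaussianReal μ v))
    (hxf : Integrable (fun x => (x - μ) * f x) (gaussianReal μ v)) :
    ∫ x, (x - μ) * f x ∂gaussianReal μ v = v * ∫ x, f' x ∂gaussianReal μ v := by
  set p := gaussianPDFReal μ v
  have hv' : (v : ℝ) ≠ 0 := by exact_mod_cast hv
  have hfp' : ∀ x, f x * (-((x - μ) / v) * p x) = -(v : ℝ)⁻¹ * (p x * ((x - μ) * f x)) :=
    fun x => by field_simp
  rw [integrable_gaussianReal_iff hv] at hfi hf'i hxf
  -- integrability of `f * p` is what makes the boundary terms vanish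
  have hparts := integral_mul_deriv_eq_deriv_mul_of_integrable (fun x _ => hf x)
    (fun x _ => hasDerivAt_gaussianPDFReal μ v x)
    ((hxf.const_mul (-(v : ℝ)⁻¹)).congr (ae_of_all _ fun x => (hfp' x).symm))
    (hf'i.congr (ae_of_all _ fun x => mul_comm _ _))
    (hfi.congr (ae_of_all _ fun x => mul_comm _ _))
  simp only [integral_gaussianReal_eq_integral_smul hv, smul_eq_mul]
  calc ∫ x, p x * ((x - μ) * f x)
      = -v * ∫ x, f x * (-((x - μ) / v) * p x) := by
        rw [integral_congr_ae (ae_of_all _ hfp'), integral_const_mul]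
        field_simp
    _ = v * ∫ x, p x * f' x := by
        rw [hparts]
        simp_rw [mul_comm (f' _)]
        ring

lemma integral_sq_gaussianReal_zero (v : ℝ≥0) : ∫ x, x ^ 2 ∂gaussianReal 0 v = v := by
  rw [← variance_of_integral_eq_zero aemeasurable_id' integral_id_gaussianReal,
    variance_fun_id_gaussianReal]

end ProbabilityTheory

lemma integral_sub_mul_sq {α : Type*} [MeasurableSpace α] {μ : Measure α}
    {f g : α → ℝ} (hf : MemLp f 2 μ) (hg : MemLp g 2 μ) (c : ℝ) :
    ∫ x, (f x - c * g x) ^ 2 ∂μ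
      = ∫ x, f x ^ 2 ∂μ - 2 * c * ∫ x, f x * g x ∂μ + c ^ 2 * ∫ x, g x ^ 2 ∂μ := by
  have hfg : Integrable (fun x => 2 * c * (f x * g x)) μ := (hf.integrable_mul hg).const_mul _
  have hexpand : (fun x => (f x - c * g x) ^ 2)
      = fun x => f x ^ 2 - 2 * c * (f x * g x) + c ^ 2 * g x ^ 2 := by
    ext x; ring
  rw [hexpand, integral_add (f := fun x => f x ^ 2 - 2 * c * (f x * g x))
    (hf.integrable_sq.sub hfg) (hg.integrable_sq.const_mul _), integral_sub hf.integrable_sq hfg,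
    integral_const_mul, integral_const_mul]

lemma sq_integral_mul_eq_integral_sq_iff {α : Type*} [MeasurableSpace α] {μ : Measure α}
    {f g : α → ℝ} (hf : MemLp f 2 μ) (hg : MemLp g 2 μ) (hg1 : ∫ x, g x ^ 2 ∂μ = 1) :
    (∫ x, f x * g x ∂μ) ^ 2 = ∫ x, f x ^ 2 ∂μ ↔
      ∃ c : ℝ, f =ᵐ[μ] fun x => c * g x := by
  constructor
  · intro heq
    refine ⟨∫ x, f x * g x ∂μ, ?_⟩
    have hzero : ∫ x, (f x - (∫ x, f x * g x ∂μ) * g x) ^ 2 ∂μ = 0 := by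
      rw [integral_sub_mul_sq hf hg, hg1, ← heq]; ring
    filter_upwards [(integral_eq_zero_iff_of_nonneg (fun x => sq_nonneg _)
      (hf.sub (hg.const_mul _)).integrable_sq).1 hzero] with x hx
    simpa [sub_eq_zero] using hx
  · rintro ⟨c, hc⟩
    have hfg : ∫ x, f x * g x ∂μ = c := by
      have : (fun x => f x * g x) =ᵐ[μ] fun x => c * g x ^ 2 := by
        filter_upwards [hc] with x hx
        rw [hx]; ring
      rw [integral_congr_ae this, integral_const_mul, hg1, mul_one]
    have hf2 : ∫ x, f x ^ 2 ∂μ = c ^ 2 := by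
      have : (fun x => f x ^ 2) =ᵐ[μ] fun x => c ^ 2 * g x ^ 2 := by
        filter_upwards [hc] with x hx
        rw [hx]; ring
      rw [integral_congr_ae this, integral_const_mul, hg1, mul_one]
    rw [hfg, hf2]

theorem gaussian_deriv_sq_eq_sq_iff_general (f : ℝ → ℝ)
    (hf : Differentiable ℝ f)
    (hf2 : Integrable (fun x => (f x) ^ 2) (gaussianReal 0 1))
    (hf' : Integrable (fun x => deriv f x) (gaussianReal 0 1)) :
    (∫ x, deriv f x ∂(gaussianReal 0 1)) ^ 2
        = ∫ x, (f x) ^ 2 ∂(gaussianReal 0 1)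
      ↔ ∃ α : ℝ, f =ᵐ[gaussianReal 0 1] fun x => α * x := by
  have hfL2 : MemLp f 2 (gaussianReal 0 1) :=
    (memLp_two_iff_integrable_sq hf.continuous.aestronglyMeasurable).2 hf2
  have hidL2 : MemLp (fun x : ℝ => x) 2 (gaussianReal 0 1) := memLp_id_gaussianReal' 2 (by simp)
  have hstein : ∫ x, deriv f x ∂gaussianReal 0 1 = ∫ x, f x * x ∂gaussianReal 0 1 := by
    have h := integral_sub_mul_gaussianReal_eq_mul_integral_deriv one_ne_zero
      (fun x => (hf x).hasDerivAt) (hfL2.integrable one_le_two) hf'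
      ((hidL2.integrable_mul hfL2).congr (ae_of_all _ fun x => by simp))
    simpa [mul_comm] using h.symm
  have hsecond_moment : ∫ x, x ^ 2 ∂gaussianReal 0 1 = 1 := by
    simpa using integral_sq_gaussianReal_zero 1
  rw [hstein, sq_integral_mul_eq_integral_sq_iff hfL2 hidL2 hsecond_moment]

/-- Equality case of θ₂(f) ≤ θ₁(f): `E[f'(N)]² = E[f(N)²]` iff `f(x) = αx`
(Gaussian-almost everywhere) for some real `α`. -/
theorem gaussian_deriv_sq_eq_sq_iff (f : ℝ → ℝ)
    (hf : Differentiable ℝ f)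
    (hmean : ∫ x, f x ∂(gaussianReal 0 1) = 0)
    (hf2 : Integrable (fun x => (f x) ^ 2) (gaussianReal 0 1))
    (hf' : Integrable (fun x => deriv f x) (gaussianReal 0 1)) :
    (∫ x, deriv f x ∂(gaussianReal 0 1)) ^ 2
        = ∫ x, (f x) ^ 2 ∂(gaussianReal 0 1)
      ↔ ∃ α : ℝ, f =ᵐ[gaussianReal 0 1] fun x => α * x :=
  gaussian_deriv_sq_eq_sq_iff_general f hf hf2 hf'
end

section
/- The q-th moment of the Marchenko–Pastur distribution with shape parameter γ > 0 and scale θ equals θ^q · Σ_{l=1}^{q} (1/q)·C(q,l)·C(q,l−1)·γ^{q−l}. -/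
open MeasureTheory

/-- The Marchenko–Pastur distribution with shape `γ > 0` and scale `θ > 0`:
an atom of mass `max (1 − 1/γ) 0` at `0` plus the absolutely continuous part
with density `√((u₊ − x)(x − u₋))/(2πγθx)` on `[u₋, u₊]`, `u± = θ(1 ± √γ)²`. -/
noncomputable def marchenkoPastur (γ θ : ℝ) : Measure ℝ :=
  ENNReal.ofReal (max (1 - 1 / γ) 0) • Measure.dirac 0 +
    volume.withDensity fun x =>
      ENNReal.ofReal
        (if θ * (1 - Real.sqrt γ) ^ 2 ≤ x ∧ x ≤ θ * (1 + Real.sqrt γ) ^ 2 then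
          Real.sqrt ((θ * (1 + Real.sqrt γ) ^ 2 - x) * (x - θ * (1 - Real.sqrt γ) ^ 2)) /
            (2 * Real.pi * γ * θ * x)
        else 0)

/-!
Substituting `x = θ(1+γ) + 2θ√γ cos t` turns the absolutely continuous part into a
semicircle integral, whose moments are read off from `∫₀^π cos^k t sin² t dt`; the atom at `0`
does not see `x ^ q` for `q ≥ 1`. This gives
`θ^q ∑_j Cat_j C(q-1, 2j) γ^j (1+γ)^(q-1-2j)`. Expanding `(1+γ)^(q-1-2j)`, the coefficient of
`γ^p` is a Vandermonde convolution equal to the Narayana number `C(q,p) C(q,p+1) / q`.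
-/

open MeasureTheory Finset Real Nat intervalIntegral
open scoped ENNReal

theorem Nat.sum_range_choose_mul_choose_succ (p r : ℕ) :
    ∑ j ∈ range (p + 1), p.choose j * r.choose (j + 1) = (p + r).choose (p + 1) := by
  rw [add_choose_eq, sum_antidiagonal_eq_sum_range_succ_mk, sum_range_succ _ (p + 1),
    choose_eq_zero_of_lt (lt_add_one p), zero_mul, add_zero, ← sum_range_reflect]
  refine sum_congr rfl fun j hj => ?_
  have hj : j ≤ p := mem_range_succ_iff.mp hj
  rw [choose_symm_of_eq_add (by omega : p = (p + 1 - 1 - j) + j),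
    show p + 1 - 1 - j + 1 = p + 1 - j by omega]

section Narayana

variable {K : Type*} [Field K] [CharZero K]

theorem catalan_mul_choose_mul_choose {n p j : ℕ} (hp : p ≤ n) (hj : j ≤ p) :
    (catalan j : K) * n.choose (2 * j) * (n - 2 * j).choose (p - j) =
      p.choose j * (n + 1 - p).choose (j + 1) * (n ! / (p ! * (n + 1 - p)!)) := by
  rcases lt_or_ge n (p + j) with hn | hn
  · have hzero : n.choose (2 * j) * (n - 2 * j).choose (p - j) = 0 := by
      rcases le_or_gt (2 * j) n with h | h
      · rw [choose_eq_zero_of_lt (by omega : n - 2 * j < p - j), mul_zero]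
      · rw [choose_eq_zero_of_lt h, zero_mul]
    rw [choose_eq_zero_of_lt (by omega : n + 1 - p < j + 1), mul_assoc, ← cast_mul, hzero]
    simp
  obtain ⟨d, rfl⟩ : ∃ d, p = j + d := ⟨p - j, by omega⟩
  obtain ⟨r, rfl⟩ : ∃ r, n = 2 * j + d + r := ⟨n - (j + d) - j, by omega⟩
  have hcat : (catalan j : K) = (2 * j).choose j / (j + 1) := by
    rw [eq_div_iff (Nat.cast_add_one_ne_zero j), ← centralBinom_eq_two_mul_choose]
    exact_mod_cast (mul_comm _ _).trans (succ_mul_catalan_eq_centralBinom j)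
  rw [show 2 * j + d + r - 2 * j = d + r by omega, show j + d - j = d by omega,
    show 2 * j + d + r + 1 - (j + d) = j + r + 1 by omega, hcat,
    cast_choose K (by omega : 2 * j ≤ 2 * j + d + r), cast_choose K (by omega : d ≤ d + r),
    cast_choose K (by omega : j ≤ j + d), cast_choose K (by omega : j + 1 ≤ j + r + 1),
    cast_choose K (by omega : j ≤ 2 * j)]
  rw [show 2 * j + d + r - 2 * j = d + r by omega, show d + r - d = r by omega,
    show j + d - j = d by omega, show j + r + 1 - (j + 1) = r by omega,
    show 2 * j - j = j by omega, factorial_succ j]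
  push_cast
  field_simp [factorial_ne_zero]

theorem sum_catalan_mul_choose_mul_choose {n p : ℕ} (hp : p ≤ n) :
    ∑ j ∈ range (p + 1), (catalan j : K) * n.choose (2 * j) * (n - 2 * j).choose (p - j) =
      1 / ((n + 1 : ℕ) : K) * (n + 1).choose p * (n + 1).choose (p + 1) := by
  rw [sum_congr rfl fun j hj => catalan_mul_choose_mul_choose hp (mem_range_succ_iff.mp hj),
    ← sum_mul]
  have hvdm := Nat.sum_range_choose_mul_choose_succ p (n + 1 - p)
  rw [show p + (n + 1 - p) = n + 1 by omega] at hvdm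
  rw [← hvdm, cast_choose K (by omega : p ≤ n + 1), factorial_succ n]
  push_cast
  field_simp [factorial_ne_zero]

theorem one_add_pow_eq_sum_range {R : Type*} [CommSemiring R] (x : R) {n N : ℕ} (h : n < N) :
    (1 + x) ^ n = ∑ m ∈ range N, x ^ m * n.choose m := by
  rw [add_comm, add_pow]
  simp only [one_pow, mul_one]
  exact sum_subset (range_subset_range.mpr h) fun m _ hm => by
    rw [choose_eq_zero_of_lt (by simpa using hm), cast_zero, mul_zero]

theorem sum_catalan_mul_choose_mul_pow_mul_one_add_pow (n : ℕ) (γ : K) :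
    ∑ j ∈ range (n + 1), (catalan j : K) * n.choose (2 * j) * γ ^ j * (1 + γ) ^ (n - 2 * j) =
      ∑ p ∈ range (n + 1),
        1 / ((n + 1 : ℕ) : K) * (n + 1).choose p * (n + 1).choose (p + 1) * γ ^ p := by
  let T (j m : ℕ) : K := catalan j * n.choose (2 * j) * (n - 2 * j).choose m * γ ^ (j + m)
  have hrhs : ∀ p ∈ range (n + 1),
      1 / ((n + 1 : ℕ) : K) * (n + 1).choose p * (n + 1).choose (p + 1) * γ ^ p =
        ∑ j ∈ range (p + 1), T j (p - j) := by
    intro p hp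
    rw [← sum_catalan_mul_choose_mul_choose (mem_range_succ_iff.mp hp), sum_mul]
    refine sum_congr rfl fun j hj => ?_
    simp only [T, Nat.add_sub_cancel' (mem_range_succ_iff.mp hj)]
  have hlhs : ∀ j ∈ range (n + 1),
      (catalan j : K) * n.choose (2 * j) * γ ^ j * (1 + γ) ^ (n - 2 * j) =
        ∑ m ∈ range (n + 1 - j), T j m := by
    intro j hj
    rw [one_add_pow_eq_sum_range γ (by have := mem_range.mp hj; omega : n - 2 * j < n + 1 - j),
      mul_sum]
    exact sum_congr rfl fun m _ => by ring
  rw [sum_congr rfl hrhs, sum_range_diag_flip, sum_congr rfl hlhs]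

end Narayana

theorem sum_Icc_choose_mul_choose_pred_mul_pow {K : Type*} [Field K] (q : ℕ) (γ : K) :
    ∑ l ∈ Icc 1 q, 1 / (q : K) * q.choose l * q.choose (l - 1) * γ ^ (q - l) =
      ∑ p ∈ range q, 1 / (q : K) * q.choose p * q.choose (p + 1) * γ ^ p := by
  rw [← Ico_add_one_right_eq_Icc, sum_Ico_eq_sum_range, Nat.add_sub_cancel, ← sum_range_reflect]
  refine sum_congr rfl fun p hp => ?_
  have hp := mem_range.mp hp
  rw [show 1 + (q - 1 - p) = q - p by omega, Nat.choose_symm hp.le,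
    show q - p - 1 = q - (p + 1) by omega, Nat.choose_symm hp, show q - (q - p) = p by omega]

theorem Finset.sum_range_two_mul {M : Type*} [AddCommMonoid M] (n : ℕ) (f : ℕ → M) :
    ∑ k ∈ range (2 * n), f k = ∑ j ∈ range n, (f (2 * j) + f (2 * j + 1)) := by
  induction n with
  | zero => simp
  | succ n ih => rw [mul_add_one, sum_range_succ, sum_range_succ, sum_range_succ, ih, add_assoc]

theorem integral_cos_pow_add_two (n : ℕ) :
    ∫ x in 0..π, cos x ^ (n + 2) = (n + 1) / (n + 2) * ∫ x in 0..π, cos x ^ n := by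
  simp [integral_cos_pow]

theorem integral_cos_pow_two_mul (j : ℕ) :
    ∫ x in 0..π, cos x ^ (2 * j) = π * j.centralBinom / 4 ^ j := by
  induction j with
  | zero => simp
  | succ j ih =>
    have hrec : ((j + 1 : ℕ) : ℝ) * (j + 1).centralBinom = 2 * (2 * j + 1) * j.centralBinom :=
      mod_cast succ_mul_centralBinom_succ j
    rw [mul_add_one, integral_cos_pow_add_two, ih]
    push_cast at hrec ⊢
    field_simp
    rw [pow_succ]
    linear_combination (-2 * 4 ^ j) * hrec

theorem integral_cos_pow_mul_sin_sq (n : ℕ) :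
    ∫ x in 0..π, cos x ^ n * sin x ^ 2 = (∫ x in 0..π, cos x ^ n) / (n + 2) := by
  have hcont (m : ℕ) : IntervalIntegrable (fun x => cos x ^ m) volume 0 π :=
    (continuous_cos.pow m).intervalIntegrable 0 π
  have hsin (x : ℝ) : cos x ^ n * sin x ^ 2 = cos x ^ n - cos x ^ (n + 2) := by
    rw [sin_sq]; ring
  simp_rw [hsin]
  rw [integral_sub (hcont n) (hcont (n + 2)), integral_cos_pow_add_two]
  field_simp
  ring

theorem integral_cos_pow_two_mul_mul_sin_sq (j : ℕ) :
    ∫ x in 0..π, cos x ^ (2 * j) * sin x ^ 2 = π * catalan j / (2 * 4 ^ j) := by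
  have hcat : ((j : ℝ) + 1) * catalan j = j.centralBinom :=
    mod_cast succ_mul_catalan_eq_centralBinom j
  rw [integral_cos_pow_mul_sin_sq, integral_cos_pow_two_mul, ← hcat]
  push_cast
  field_simp

theorem integral_cos_pow_two_mul_add_one_mul_sin_sq (j : ℕ) :
    ∫ x in 0..π, cos x ^ (2 * j + 1) * sin x ^ 2 = 0 := by
  simp_rw [mul_comm (cos _ ^ _)]
  simp [integral_sin_pow_mul_cos_pow_odd]

theorem integral_add_mul_cos_pow_mul_sin_sq (c r : ℝ) (n : ℕ) :
    ∫ x in 0..π, (c + r * cos x) ^ n * sin x ^ 2 =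
      π / 2 * ∑ j ∈ range (n + 1),
        catalan j * n.choose (2 * j) * (r ^ 2 / 4) ^ j * c ^ (n - 2 * j) := by
  let t (k : ℕ) : ℝ := r ^ k * c ^ (n - k) * n.choose k * ∫ x in 0..π, cos x ^ k * sin x ^ 2
  have hexpand : ∫ x in 0..π, (c + r * cos x) ^ n * sin x ^ 2 = ∑ k ∈ range (n + 1), t k := by
    simp_rw [add_comm c, add_pow, sum_mul]
    rw [intervalIntegral.integral_finsetSum fun k _ =>
      (by fun_prop : Continuous _).intervalIntegrable 0 π]
    refine sum_congr rfl fun k _ => ?_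
    simp only [t]
    rw [← intervalIntegral.integral_const_mul]
    refine integral_congr fun x _ => ?_
    ring
  have hpad : ∑ k ∈ range (n + 1), t k = ∑ k ∈ range (2 * (n + 1)), t k :=
    sum_subset (range_subset_range.mpr (by omega)) fun k _ hk => by
      simp [t, choose_eq_zero_of_lt (by simpa using hk : n < k)]
  rw [hexpand, hpad, sum_range_two_mul, mul_sum]
  refine sum_congr rfl fun j _ => ?_
  simp only [t]
  rw [integral_cos_pow_two_mul_add_one_mul_sin_sq, integral_cos_pow_two_mul_mul_sin_sq, mul_zero,
    add_zero, pow_mul, div_pow]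
  field_simp

theorem integral_mul_sqrt_sq_sub_sq {f : ℝ → ℝ} (hf : Continuous f) (c : ℝ) {r : ℝ}
    (hr : 0 ≤ r) :
    ∫ x in (c - r)..(c + r), f x * √(r ^ 2 - (x - c) ^ 2) =
      r ^ 2 * ∫ t in 0..π, f (c + r * cos t) * sin t ^ 2 := by
  let g (x : ℝ) := f x * √(r ^ 2 - (x - c) ^ 2)
  let u (t : ℝ) := c + r * cos t
  have hsubst : ∫ t in 0..π, (g ∘ u) t * (r * -sin t) = ∫ x in u 0..u π, g x :=
    integral_comp_mul_deriv (fun t _ => ((hasDerivAt_cos t).const_mul r).const_add c)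
      (by fun_prop) (by fun_prop)
  have hintegrand : ∀ t ∈ Set.uIcc 0 π,
      (g ∘ u) t * (r * -sin t) = -(r ^ 2 * (f (c + r * cos t) * sin t ^ 2)) := by
    intro t ht
    rw [Set.uIcc_of_le pi_pos.le] at ht
    have hsin : 0 ≤ sin t := sin_nonneg_of_nonneg_of_le_pi ht.1 ht.2
    have hsqrt : √(r ^ 2 - (c + r * cos t - c) ^ 2) = r * sin t := by
      rw [← sqrt_sq (mul_nonneg hr hsin), mul_pow r (sin t), sin_sq]
      ring_nf
    simp only [Function.comp_apply, g, u, hsqrt]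
    ring
  rw [integral_congr hintegrand, intervalIntegral.integral_neg,
    intervalIntegral.integral_const_mul] at hsubst
  simp only [u, cos_zero, cos_pi, mul_one, mul_neg, ← sub_eq_add_neg] at hsubst
  rw [integral_symm, ← hsubst, neg_neg]

theorem integral_pow_mul_sqrt_sq_sub_sq (c : ℝ) {r : ℝ} (hr : 0 ≤ r) (n : ℕ) :
    ∫ x in (c - r)..(c + r), x ^ n * √(r ^ 2 - (x - c) ^ 2) =
      π * r ^ 2 / 2 * ∑ j ∈ range (n + 1),
        catalan j * n.choose (2 * j) * (r ^ 2 / 4) ^ j * c ^ (n - 2 * j) := by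
  rw [integral_mul_sqrt_sq_sub_sq (continuous_pow n) c hr, integral_add_mul_cos_pow_mul_sin_sq]
  ring

theorem integral_smul_dirac_add_withDensity_ofReal {α : Type*} [MeasurableSpace α]
    [MeasurableSingletonClass α] {μ : Measure α} {a : α} {c : ℝ≥0∞} (hc : c ≠ ∞)
    {f ρ : α → ℝ}
    (hfa : f a = 0) (hρ : Measurable ρ) (hρ_nonneg : ∀ x, 0 ≤ ρ x)
    (hfρ : Integrable (fun x => f x * ρ x) μ) :
    ∫ x, f x ∂(c • Measure.dirac a + μ.withDensity fun x => ENNReal.ofReal (ρ x)) =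
      ∫ x, f x * ρ x ∂μ := by
  have hdens : Measurable fun x => ENNReal.ofReal (ρ x) := hρ.ennreal_ofReal
  have hfin : ∀ᵐ x ∂μ, ENNReal.ofReal (ρ x) < ∞ :=
    ae_of_all _ fun _ => ENNReal.ofReal_lt_top
  have htoReal : (fun x => (ENNReal.ofReal (ρ x)).toReal • f x) = fun x => f x * ρ x := by
    ext x
    rw [ENNReal.toReal_ofReal (hρ_nonneg x), smul_eq_mul, mul_comm]
  have hdirac : Integrable f (c • Measure.dirac a) :=
    (integrable_dirac enorm_lt_top).smul_measure hc
  have hdensity : Integrable f (μ.withDensity fun x => ENNReal.ofReal (ρ x)) := by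
    rwa [integrable_withDensity_iff_integrable_smul' hdens hfin, htoReal]
  rw [integral_add_measure hdirac hdensity, MeasureTheory.integral_smul_measure, integral_dirac,
    hfa, smul_zero, zero_add, integral_withDensity_eq_integral_toReal_smul hdens hfin, htoReal]

theorem integral_pow_succ_marchenkoPastur_eq_intervalIntegral {γ θ : ℝ} (hγ : 0 < γ)
    (hθ : 0 < θ) (n : ℕ) :
    ∫ x, x ^ (n + 1) ∂marchenkoPastur γ θ =
      (∫ x in (θ * (1 - √γ) ^ 2)..(θ * (1 + √γ) ^ 2),
        x ^ n * √((θ * (1 + √γ) ^ 2 - x) * (x - θ * (1 - √γ) ^ 2))) /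
        (2 * π * γ * θ) := by
  unfold marchenkoPastur
  set a := θ * (1 - √γ) ^ 2
  set b := θ * (1 + √γ) ^ 2
  have ha : 0 ≤ a := by positivity
  have hab : a ≤ b := by nlinarith [sqrt_nonneg γ]
  let ρ (x : ℝ) : ℝ :=
    if a ≤ x ∧ x ≤ b then √((b - x) * (x - a)) / (2 * π * γ * θ * x) else 0
  let g (x : ℝ) : ℝ := x ^ n * √((b - x) * (x - a)) / (2 * π * γ * θ)
  have hρ : Measurable ρ := Measurable.ite measurableSet_Icc (by fun_prop) (by fun_prop)
  have hρ_nonneg (x : ℝ) : 0 ≤ ρ x := by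
    by_cases hx : a ≤ x ∧ x ≤ b
    · have : 0 ≤ x := ha.trans hx.1
      simp only [ρ, hx, and_self, if_true]
      positivity
    · simp [ρ, hx]
  have hρg (x : ℝ) : x ^ (n + 1) * ρ x = (Set.Icc a b).indicator g x := by
    by_cases hx : a ≤ x ∧ x ≤ b
    · rw [Set.indicator_of_mem (show x ∈ Set.Icc a b from hx)]
      simp only [ρ, g, hx, and_self, if_true]
      -- `x = 0` lies in the support only when `a = 0`, and then the square root vanishes.
      rcases (ha.trans hx.1).eq_or_lt with hx0 | hx0
      · have ha0 : a = 0 := le_antisymm (hx0 ▸ hx.1) ha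
        simp [← hx0, ha0]
      · field_simp
        ring
    · rw [Set.indicator_of_notMem (show x ∉ Set.Icc a b from hx)]
      simp [ρ, hx]
  have hg : Continuous g := by fun_prop
  have hint : Integrable fun x => x ^ (n + 1) * ρ x := by
    simp_rw [hρg]
    exact (hg.integrableOn_Icc).integrable_indicator measurableSet_Icc
  rw [integral_smul_dirac_add_withDensity_ofReal (f := fun x => x ^ (n + 1)) (ρ := ρ)
    ENNReal.ofReal_ne_top (zero_pow n.succ_ne_zero) hρ hρ_nonneg hint]
  simp_rw [hρg]
  rw [MeasureTheory.integral_indicator measurableSet_Icc, integral_Icc_eq_integral_Ioc,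
    ← integral_of_le hab, intervalIntegral.integral_div]

theorem integral_pow_succ_marchenkoPastur {γ θ : ℝ} (hγ : 0 < γ) (hθ : 0 < θ) (n : ℕ) :
    ∫ x, x ^ (n + 1) ∂marchenkoPastur γ θ =
      θ ^ (n + 1) * ∑ j ∈ range (n + 1),
        (catalan j : ℝ) * n.choose (2 * j) * γ ^ j * (1 + γ) ^ (n - 2 * j) := by
  set c := θ * (1 + γ)
  set r := 2 * θ * √γ
  have hsq : √γ ^ 2 = γ := sq_sqrt hγ.le
  have hlower : θ * (1 - √γ) ^ 2 = c - r := by linear_combination θ * hsq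
  have hupper : θ * (1 + √γ) ^ 2 = c + r := by linear_combination θ * hsq
  have hr2 : r ^ 2 = 4 * (θ ^ 2 * γ) := by linear_combination 4 * θ ^ 2 * hsq
  have hquad (x : ℝ) : (c + r - x) * (x - (c - r)) = r ^ 2 - (x - c) ^ 2 := by ring
  have hterm : ∀ j ∈ range (n + 1),
      (catalan j : ℝ) * n.choose (2 * j) * (r ^ 2 / 4) ^ j * c ^ (n - 2 * j) =
        θ ^ n * (catalan j * n.choose (2 * j) * γ ^ j * (1 + γ) ^ (n - 2 * j)) := by
    intro j _
    rcases le_or_gt (2 * j) n with h | h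
    · rw [hr2, mul_div_cancel_left₀ _ four_ne_zero, mul_pow, mul_pow, ← pow_mul,
        ← pow_mul_pow_sub θ h]
      ring
    · simp [choose_eq_zero_of_lt h]
  rw [integral_pow_succ_marchenkoPastur_eq_intervalIntegral hγ hθ, hlower, hupper]
  simp_rw [hquad]
  rw [integral_pow_mul_sqrt_sq_sub_sq c (by positivity) n, sum_congr rfl hterm, ← mul_sum, hr2]
  field_simp
  ring

/-- The `q`-th moment of the Marchenko–Pastur distribution with shape `γ` and
scale `θ` equals `θ^q Σ_{l=1}^q (1/q) C(q,l) C(q,l−1) γ^{q−l}`. -/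
theorem marchenkoPastur_moment (γ θ : ℝ) (hγ : 0 < γ) (hθ : 0 < θ)
    (q : ℕ) (hq : 1 ≤ q) :
    ∫ x, x ^ q ∂(marchenkoPastur γ θ)
      = θ ^ q * ∑ l ∈ Finset.Icc 1 q,
          (1 / (q : ℝ)) * (Nat.choose q l : ℝ) * (Nat.choose q (l - 1) : ℝ)
            * γ ^ (q - l) := by
  obtain ⟨n, rfl⟩ := Nat.exists_eq_add_of_le' hq
  rw [integral_pow_succ_marchenkoPastur hγ hθ, sum_Icc_choose_mul_choose_pred_mul_pow,
    sum_catalan_mul_choose_mul_pow_mul_one_add_pow]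
end

section
/- For f_α as above, θ₃(f_α) = E[(1/2)f_α''(N)]² = (α⁴/4)·e^{−α²} / (e^{−α²}(cosh(α²) − 1)) = α⁴ / (4(cosh(α²) − 1)), which tends to 1/2 as α → 0 and to 0 as α → ∞. -/
open MeasureTheory ProbabilityTheory Filter Topology Real
open scoped NNReal

/-!
The second derivative of `f_α` is `-α² cos(α·)/s` with `s` the normalising constant, and the
Gaussian expectation of `cos(αN)` is the real part of the characteristic function of `N`, so
`θ₃(f_α) = (α² e^{-α²/2} / 2s)² = α⁴ / (4(cosh α² − 1))`. Both limits come from writing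
`cosh t − 1` as `2 sinh²(t/2)` near `0` and as `(1 − e^{-t})² / (2e^{-t})` near `∞`.
-/

lemma integral_cos_mul_gaussianReal (μ : ℝ) (v : ℝ≥0) (t : ℝ) :
    ∫ x, cos (t * x) ∂(gaussianReal μ v) = exp (-(v * t ^ 2 / 2)) * cos (t * μ) := by
  have hint : Integrable (fun x : ℝ => Complex.exp (t * x * Complex.I)) (gaussianReal μ v) :=
    Integrable.of_bound (by fun_prop) 1 (ae_of_all _ fun x => by
      simp [← Complex.ofReal_mul, Complex.norm_exp_ofReal_mul_I])
  have h := congrArg Complex.re (charFun_gaussianReal (μ := μ) (v := v) t)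
  rw [charFun_apply_real, ← RCLike.re_to_complex, ← integral_re hint] at h
  simpa [Complex.exp_re, ← Complex.ofReal_pow, ← Complex.ofReal_mul] using h

lemma deriv_deriv_cos_mul_sub_div (α c s : ℝ) :
    deriv (deriv fun y => (cos (α * y) - c) / s) = fun x => -(α ^ 2 * cos (α * x)) / s := by
  have h1 (y : ℝ) : HasDerivAt (fun y => (cos (α * y) - c) / s) (-(α * sin (α * y)) / s) y :=
    ((hasDerivAt_const_mul α).cos.sub_const c |>.div_const s).congr_deriv (by ring)
  have h2 (y : ℝ) : HasDerivAt (fun y => -(α * sin (α * y)) / s) (-(α ^ 2 * cos (α * y)) / s) y :=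
    ((hasDerivAt_const_mul α).sin.const_mul α |>.neg.div_const s).congr_deriv (by ring)
  rw [funext fun y => (h1 y).deriv]
  exact funext fun y => (h2 y).deriv

lemma sq_div_sqrt_exp_neg_mul_mul_exp (a b c : ℝ) (hc : 0 ≤ c) :
    (a / √(exp (-b) * c) * exp (-(b / 2))) ^ 2 = a ^ 2 / c := by
  have hexp : exp (-(b / 2)) ^ 2 = exp (-b) := by rw [← exp_nat_mul]; ring_nf
  rw [mul_pow, div_pow, sq_sqrt (by positivity), hexp, div_mul_eq_mul_div,
    mul_comm (exp (-b)) c, mul_div_mul_right _ _ (exp_pos _).ne']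

lemma cosh_sub_one_eq_two_mul_sinh_half_sq (t : ℝ) : cosh t - 1 = 2 * sinh (t / 2) ^ 2 := by
  have h := cosh_two_mul (t / 2)
  rw [mul_div_cancel₀ t two_ne_zero, cosh_sq] at h
  linarith

lemma cosh_sub_one_eq_sq_div_exp_neg (t : ℝ) :
    cosh t - 1 = (1 - exp (-t)) ^ 2 / (2 * exp (-t)) := by
  rw [cosh_eq, exp_neg]
  field_simp
  ring

lemma tendsto_sinh_half_div_self : Tendsto (fun t => sinh (t / 2) / t) (𝓝[≠] 0) (𝓝 (1 / 2)) := by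
  have h : HasDerivAt (fun t => sinh (t / 2)) (cosh (0 / 2) * (1 / 2)) 0 :=
    ((hasDerivAt_id 0).div_const 2).sinh
  rw [hasDerivAt_iff_tendsto_slope_zero] at h
  simpa [div_eq_inv_mul] using h

lemma tendsto_sq_div_cosh_sub_one_nhdsNE :
    Tendsto (fun t => t ^ 2 / (cosh t - 1)) (𝓝[≠] 0) (𝓝 2) := by
  have h := ((tendsto_sinh_half_div_self.pow 2).const_mul 2).inv₀ (by norm_num)
  norm_num at h
  refine h.congr fun t => ?_
  rw [cosh_sub_one_eq_two_mul_sinh_half_sq, div_pow, inv_div]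
  ring

lemma tendsto_pow_div_cosh_sub_one_atTop (n : ℕ) :
    Tendsto (fun t => t ^ n / (cosh t - 1)) atTop (𝓝 0) := by
  have hden : Tendsto (fun t => (1 - exp (-t)) ^ 2) atTop (𝓝 1) := by
    simpa using (tendsto_exp_neg_atTop_nhds_zero.const_sub 1).pow 2
  have h := ((tendsto_pow_mul_exp_neg_atTop_nhds_zero n).const_mul 2).div hden one_ne_zero
  simp only [mul_zero, zero_div] at h
  refine h.congr fun t => ?_
  rw [Pi.div_apply, cosh_sub_one_eq_sq_div_exp_neg, div_div_eq_mul_div]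
  ring

lemma tendsto_sq_nhdsGT_nhdsNE : Tendsto (fun α : ℝ => α ^ 2) (𝓝[>] 0) (𝓝[≠] 0) :=
  tendsto_nhdsWithin_of_tendsto_nhds_of_eventually_within _
    ((continuous_pow 2).tendsto' 0 0 (zero_pow two_ne_zero) |>.mono_left nhdsWithin_le_nhds)
    (eventually_nhdsWithin_of_forall fun _ hα => (pow_pos hα 2).ne')

/-- For `f_α(x) = (cos(αx) − e^{−α²/2})/√(e^{−α²}(cosh(α²) − 1))` and `N`
standard Gaussian, `θ₃(f_α) = E[(1/2)f_α''(N)]² = α⁴/(4(cosh(α²) − 1))`,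
which tends to `1/2` as `α → 0⁺` and to `0` as `α → ∞`. -/
theorem cosine_family_theta3 :
    (∀ α : ℝ, 0 < α →
      (∫ x, (1 / 2 : ℝ) * deriv (deriv (fun y =>
          (Real.cos (α * y) - Real.exp (-α ^ 2 / 2)) /
            Real.sqrt (Real.exp (-α ^ 2) * (Real.cosh (α ^ 2) - 1)))) x
        ∂(gaussianReal 0 1)) ^ 2
        = α ^ 4 / (4 * (Real.cosh (α ^ 2) - 1)))
    ∧ Tendsto (fun α : ℝ => α ^ 4 / (4 * (Real.cosh (α ^ 2) - 1)))
        (nhdsWithin 0 (Set.Ioi 0)) (nhds (1 / 2))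
    ∧ Tendsto (fun α : ℝ => α ^ 4 / (4 * (Real.cosh (α ^ 2) - 1)))
        atTop (nhds 0) := by
  have hθ (α : ℝ) : α ^ 4 / (4 * (cosh (α ^ 2) - 1)) = (α ^ 2) ^ 2 / (cosh (α ^ 2) - 1) / 4 := by
    rw [div_div, mul_comm (cosh (α ^ 2) - 1)]
    ring
  refine ⟨fun α _ => ?_, ?_, ?_⟩
  · set s := √(exp (-α ^ 2) * (cosh (α ^ 2) - 1))
    have hf'' : (fun x => 1 / 2 * deriv (deriv fun y => (cos (α * y) - exp (-α ^ 2 / 2)) / s) x)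
        = fun x => -(α ^ 2 / 2) / s * cos (α * x) := by
      rw [deriv_deriv_cos_mul_sub_div]
      funext x
      ring
    rw [hf'', integral_const_mul, integral_cos_mul_gaussianReal]
    simp only [NNReal.coe_one, one_mul, mul_zero, cos_zero, mul_one]
    rw [sq_div_sqrt_exp_neg_mul_mul_exp _ _ _ (sub_nonneg.mpr (one_le_cosh _)), neg_sq, div_pow,
      div_div]
    ring
  · simp_rw [hθ]
    rw [show (1 / 2 : ℝ) = 2 / 4 by norm_num]
    exact (tendsto_sq_div_cosh_sub_one_nhdsNE.comp tendsto_sq_nhdsGT_nhdsNE).div_const 4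
  · simp_rw [hθ]
    simpa using
      ((tendsto_pow_div_cosh_sub_one_atTop 2).comp (tendsto_pow_atTop two_ne_zero)).div_const 4
end
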